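/- With notation as in the context, there exists a real number L such that R·C = L·Q(g, g∧Ricc) (equality of (0,6)-tensors) if and only if μ = 0, or a = 0, b = 0 and c² + k̃ = 0. In particular, if k̃ > 0 then such an L exists if and only if μ = 0. (This is the pointwise algebraic form of the theorem characterizing Wintgen ideal submanifolds whose tensors R·C and Q(g, g∧Ricc) are linearly dependent.) -/
import Mathlib


noncomputable section

namespace Wintgen

/-- The standard inner product `g` on `ℝ^n`. -/
def gg (n : ℕ) (x y : Fin n → ℝ) : ℝ := ∑ i, x i * y i

/-- The standard orthonormal basis vectors `E_i` (0-indexed). -/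
def E (n : ℕ) (i : Fin n) : Fin n → ℝ := fun j => if j = i then 1 else 0

/-- Auxiliary: the `j`-th coordinate of `x` (0 if out of range). -/
def coord (n : ℕ) (x : Fin n → ℝ) (j : ℕ) : ℝ := if h : j < n then x ⟨j, h⟩ else 0

/-- The Choi–Lu shape operator `A_1`. -/
def A1 (n : ℕ) (a μ : ℝ) (x : Fin n → ℝ) : Fin n → ℝ := fun i =>
  if (i : ℕ) = 0 then a * x i + μ * coord n x 1
  else if (i : ℕ) = 1 then μ * coord n x 0 + a * x i
  else a * x i

/-- The Choi–Lu shape operator `A_2`. -/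
def A2 (n : ℕ) (b μ : ℝ) (x : Fin n → ℝ) : Fin n → ℝ := fun i =>
  if (i : ℕ) = 0 then (b + μ) * x i
  else if (i : ℕ) = 1 then (b - μ) * x i
  else b * x i

/-- The Choi–Lu shape operator `A_3 = c • id`. -/
def A3 (n : ℕ) (c : ℝ) (x : Fin n → ℝ) : Fin n → ℝ := fun i => c * x i

/-- The Gauss-equation curvature tensor `R`. -/
def Rt (n : ℕ) (a b c μ k : ℝ) (X Y Z W : Fin n → ℝ) : ℝ :=
  (gg n (A1 n a μ X) W * gg n (A1 n a μ Y) Z - gg n (A1 n a μ X) Z * gg n (A1 n a μ Y) W)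
  + (gg n (A2 n b μ X) W * gg n (A2 n b μ Y) Z - gg n (A2 n b μ X) Z * gg n (A2 n b μ Y) W)
  + (gg n (A3 n c X) W * gg n (A3 n c Y) Z - gg n (A3 n c X) Z * gg n (A3 n c Y) W)
  + k * (gg n X W * gg n Y Z - gg n X Z * gg n Y W)

/-- The Ricci tensor `Ricc(X,Y) = ∑ i, R(E_i, X, Y, E_i)`. -/
def Ricc (n : ℕ) (a b c μ k : ℝ) (X Y : Fin n → ℝ) : ℝ :=
  ∑ i, Rt n a b c μ k (E n i) X Y (E n i)

/-- The scalar curvature `τ`. -/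
def tau (n : ℕ) (a b c μ k : ℝ) : ℝ := ∑ i, Ricc n a b c μ k (E n i) (E n i)

/-- The Kulkarni–Nomizu product of two bilinear forms. -/
def KN (n : ℕ) (A B : (Fin n → ℝ) → (Fin n → ℝ) → ℝ) (X1 X2 X3 X4 : Fin n → ℝ) : ℝ :=
  A X1 X4 * B X2 X3 + A X2 X3 * B X1 X4 - A X1 X3 * B X2 X4 - A X2 X4 * B X1 X3

/-- The Weyl conformal curvature tensor `C`. -/
def Ct (n : ℕ) (a b c μ k : ℝ) (X Y Z W : Fin n → ℝ) : ℝ :=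
  Rt n a b c μ k X Y Z W
    - (1 / ((n : ℝ) - 2)) * KN n (gg n) (Ricc n a b c μ k) X Y Z W
    + (tau n a b c μ k / (2 * ((n : ℝ) - 1) * ((n : ℝ) - 2))) * KN n (gg n) (gg n) X Y Z W

/-- The endomorphism `(X ∧_A Y)` applied to `Z`. -/
def wedge (n : ℕ) (A : (Fin n → ℝ) → (Fin n → ℝ) → ℝ) (X Y Z : Fin n → ℝ) : Fin n → ℝ :=
  fun j => A Y Z * X j - A X Z * Y j

/-- The endomorphism determined by `g(Op(X,Y)Z, W) = T(X,Y,Z,W)`: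
its `j`-th component is `T(X,Y,Z,E_j)`. -/
def curvOp (n : ℕ) (T : (Fin n → ℝ) → (Fin n → ℝ) → (Fin n → ℝ) → (Fin n → ℝ) → ℝ)
    (X Y Z : Fin n → ℝ) : Fin n → ℝ := fun j => T X Y Z (E n j)

/-- Derivation-type action of a family of operators on a (0,4)-tensor. -/
def dotT (n : ℕ) (Op : (Fin n → ℝ) → (Fin n → ℝ) → (Fin n → ℝ) → (Fin n → ℝ))
    (T : (Fin n → ℝ) → (Fin n → ℝ) → (Fin n → ℝ) → (Fin n → ℝ) → ℝ)
    (X1 X2 X3 X4 X Y : Fin n → ℝ) : ℝ :=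
  - T (Op X Y X1) X2 X3 X4 - T X1 (Op X Y X2) X3 X4
  - T X1 X2 (Op X Y X3) X4 - T X1 X2 X3 (Op X Y X4)

/-- The (0,6)-tensor `R · C`. -/
def RC (n : ℕ) (a b c μ k : ℝ) :=
  dotT n (fun X Y => curvOp n (Rt n a b c μ k) X Y) (Ct n a b c μ k)

/-- The (0,6)-tensor `C · R`. -/
def CR (n : ℕ) (a b c μ k : ℝ) :=
  dotT n (fun X Y => curvOp n (Ct n a b c μ k) X Y) (Rt n a b c μ k)

/-- The Tachibana tensor `Q(A, T)`. -/
def Q (n : ℕ) (A : (Fin n → ℝ) → (Fin n → ℝ) → ℝ)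
    (T : (Fin n → ℝ) → (Fin n → ℝ) → (Fin n → ℝ) → (Fin n → ℝ) → ℝ) :=
  dotT n (fun X Y => wedge n A X Y) T

section Aux

variable (n : ℕ)

lemma coord_E (i : Fin n) (m : ℕ) :
    coord n (E n i) m = if (i : ℕ) = m then 1 else 0 := by
  unfold coord E
  by_cases h : m < n
  · rw [dif_pos h]
    simp [Fin.ext_iff, eq_comm]
  · rw [dif_neg h]
    have := i.isLt
    rw [if_neg (by omega)]

lemma gg_E_right (X : Fin n → ℝ) (j : Fin n) : gg n X (E n j) = X j := by
  simp [gg, E, mul_ite]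

lemma gg_E_left (X : Fin n → ℝ) (i : Fin n) : gg n (E n i) X = X i := by
  simp [gg, E, ite_mul]

lemma E_self (i : Fin n) : E n i i = 1 := by simp [E]

lemma gg_EE (i j : Fin n) : gg n (E n i) (E n j) = if i = j then 1 else 0 := by
  rw [gg_E_right]
  simp [E, eq_comm]

lemma gg_comm (X Y : Fin n → ℝ) : gg n X Y = gg n Y X :=
  Finset.sum_congr rfl fun i _ => mul_comm _ _

lemma coord_mk (m : ℕ) (h : m < n) (X : Fin n → ℝ) : coord n X m = X ⟨m, h⟩ :=
  dif_pos h

lemma sum_ind (m : ℕ) (h : m < n) (f : Fin n → ℝ) :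
    (∑ j : Fin n, if (j : ℕ) = m then f j else 0) = f ⟨m, h⟩ := by
  have he : ∀ j : Fin n, ((j : ℕ) = m) = (j = ⟨m, h⟩) := fun j => by
    simp [Fin.ext_iff]
  simp only [he]
  rw [Finset.sum_ite_eq']
  simp

end Aux
section Forms

variable (n : ℕ)

/-- The symmetric form `S = a P₁ + b P₂` (supported on the `e₀,e₁` plane). -/
def Sf (a b : ℝ) (X Y : Fin n → ℝ) : ℝ :=
  a * (coord n X 0 * coord n Y 1 + coord n X 1 * coord n Y 0)
    + b * (coord n X 0 * coord n Y 0 - coord n X 1 * coord n Y 1)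

/-- The projection form `G` onto the `e₀,e₁` plane. -/
def Gf (X Y : Fin n → ℝ) : ℝ :=
  coord n X 0 * coord n Y 0 + coord n X 1 * coord n Y 1

lemma Sf_E (a b : ℝ) (X : Fin n → ℝ) (j : Fin n) :
    Sf n a b X (E n j) =
      (if (j : ℕ) = 0 then a * coord n X 1 + b * coord n X 0 else 0)
        + (if (j : ℕ) = 1 then a * coord n X 0 - b * coord n X 1 else 0) := by
  simp only [Sf, coord_E]
  split_ifs <;> first | omega | ring

lemma Sf_E_left (a b : ℝ) (X : Fin n → ℝ) (j : Fin n) :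
    Sf n a b (E n j) X =
      (if (j : ℕ) = 0 then a * coord n X 1 + b * coord n X 0 else 0)
        + (if (j : ℕ) = 1 then a * coord n X 0 - b * coord n X 1 else 0) := by
  simp only [Sf, coord_E]
  split_ifs <;> first | omega | ring

lemma Gf_E (X : Fin n → ℝ) (j : Fin n) :
    Gf n X (E n j) =
      (if (j : ℕ) = 0 then coord n X 0 else 0)
        + (if (j : ℕ) = 1 then coord n X 1 else 0) := by
  simp only [Gf, coord_E]
  split_ifs <;> first | omega | ring

lemma Gf_E_left (X : Fin n → ℝ) (j : Fin n) :
    Gf n (E n j) X =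
      (if (j : ℕ) = 0 then coord n X 0 else 0)
        + (if (j : ℕ) = 1 then coord n X 1 else 0) := by
  simp only [Gf, coord_E]
  split_ifs <;> first | omega | ring

lemma gg_A1 (h2 : 2 ≤ n) (a μ : ℝ) (X W : Fin n → ℝ) :
    gg n (A1 n a μ X) W
      = a * gg n X W + μ * (coord n X 0 * coord n W 1 + coord n X 1 * coord n W 0) := by
  have h0 : 0 < n := by omega
  have h1 : 1 < n := by omega
  have step : ∀ i : Fin n, A1 n a μ X i * W i
      = a * (X i * W i) + ((if (i : ℕ) = 0 then μ * coord n X 1 * W i else 0)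
          + (if (i : ℕ) = 1 then μ * coord n X 0 * W i else 0)) := by
    intro i
    unfold A1
    split_ifs <;> first | omega | ring
  unfold gg
  rw [Finset.sum_congr rfl fun i _ => step i]
  rw [Finset.sum_add_distrib, Finset.sum_add_distrib, ← Finset.mul_sum,
    sum_ind n 0 h0, sum_ind n 1 h1]
  rw [show (∑ i, X i * W i) = gg n X W from rfl,
    ← coord_mk n 0 h0 W, ← coord_mk n 1 h1 W]
  ring

lemma gg_A2 (h2 : 2 ≤ n) (b μ : ℝ) (X W : Fin n → ℝ) :
    gg n (A2 n b μ X) W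
      = b * gg n X W + μ * (coord n X 0 * coord n W 0 - coord n X 1 * coord n W 1) := by
  have h0 : 0 < n := by omega
  have h1 : 1 < n := by omega
  have step : ∀ i : Fin n, A2 n b μ X i * W i
      = b * (X i * W i) + ((if (i : ℕ) = 0 then μ * (X i * W i) else 0)
          + (if (i : ℕ) = 1 then -(μ * (X i * W i)) else 0)) := by
    intro i
    unfold A2
    split_ifs <;> first | omega | ring
  unfold gg
  rw [Finset.sum_congr rfl fun i _ => step i]
  rw [Finset.sum_add_distrib, Finset.sum_add_distrib, ← Finset.mul_sum,
    sum_ind n 0 h0, sum_ind n 1 h1]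
  rw [show (∑ i, X i * W i) = gg n X W from rfl,
    ← coord_mk n 0 h0 W, ← coord_mk n 1 h1 W,
    ← coord_mk n 0 h0 X, ← coord_mk n 1 h1 X]
  ring

lemma gg_A3 (c : ℝ) (X W : Fin n → ℝ) :
    gg n (A3 n c X) W = c * gg n X W := by
  unfold gg A3
  rw [Finset.sum_congr rfl (fun i (_ : i ∈ Finset.univ) => mul_assoc c (X i) (W i)), ← Finset.mul_sum]

lemma Rt_closed (h2 : 2 ≤ n) (a b c μ k : ℝ) (X Y Z W : Fin n → ℝ) :
    Rt n a b c μ k X Y Z W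
      = (a ^ 2 + b ^ 2 + c ^ 2 + k)
          * (gg n X W * gg n Y Z - gg n X Z * gg n Y W)
        + μ * (gg n X W * Sf n a b Y Z - gg n X Z * Sf n a b Y W
            + Sf n a b X W * gg n Y Z - Sf n a b X Z * gg n Y W)
        - 2 * μ ^ 2 * (Gf n X W * Gf n Y Z - Gf n X Z * Gf n Y W) := by
  unfold Rt
  rw [gg_A1 n h2, gg_A1 n h2, gg_A1 n h2, gg_A1 n h2,
    gg_A2 n h2, gg_A2 n h2, gg_A2 n h2, gg_A2 n h2,
    gg_A3, gg_A3, gg_A3, gg_A3]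
  simp only [Sf, Gf]
  ring

end Forms
section Closed

variable (n : ℕ)

lemma Ricc_closed (h2 : 2 ≤ n) (a b c μ k : ℝ) (X Y : Fin n → ℝ) :
    Ricc n a b c μ k X Y
      = ((n : ℝ) - 1) * (a ^ 2 + b ^ 2 + c ^ 2 + k) * gg n X Y
        + ((n : ℝ) - 2) * μ * Sf n a b X Y - 2 * μ ^ 2 * Gf n X Y := by
  have h0 : 0 < n := by omega
  have h1 : 1 < n := by omega
  have step : ∀ i : Fin n, Rt n a b c μ k (E n i) X Y (E n i)
      = -((a ^ 2 + b ^ 2 + c ^ 2 + k)) * (X i * Y i)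
        + ((a ^ 2 + b ^ 2 + c ^ 2 + k) * gg n X Y + μ * Sf n a b X Y)
        + ((if (i : ℕ) = 0 then
              μ * (b * gg n X Y - Y ⟨0, h0⟩ * (a * X ⟨1, h1⟩ + b * X ⟨0, h0⟩)
                - (a * Y ⟨1, h1⟩ + b * Y ⟨0, h0⟩) * X ⟨0, h0⟩)
                - 2 * μ ^ 2 * (Gf n X Y - X ⟨0, h0⟩ * Y ⟨0, h0⟩) else 0)
          + (if (i : ℕ) = 1 then
              μ * (-(Y ⟨1, h1⟩ * (a * X ⟨0, h0⟩ - b * X ⟨1, h1⟩)) - b * gg n X Y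
                - (a * Y ⟨0, h0⟩ - b * Y ⟨1, h1⟩) * X ⟨1, h1⟩)
                - 2 * μ ^ 2 * (Gf n X Y - X ⟨1, h1⟩ * Y ⟨1, h1⟩) else 0)) := by
    intro i
    rw [Rt_closed n h2]
    by_cases hi0 : (i : ℕ) = 0
    · have : i = ⟨0, h0⟩ := Fin.ext hi0
      subst this
      simp only [gg_E_left, gg_E_right, gg_EE, E_self, Sf_E, Sf_E_left, Gf_E, Gf_E_left, coord_E]
      norm_num
      rw [coord_mk n 0 h0, coord_mk n 0 h0, coord_mk n 1 h1, coord_mk n 1 h1]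
      simp only [Gf, coord_mk n 0 h0, coord_mk n 1 h1]
      ring
    · by_cases hi1 : (i : ℕ) = 1
      · have : i = ⟨1, h1⟩ := Fin.ext hi1
        subst this
        simp only [gg_E_left, gg_E_right, gg_EE, E_self, Sf_E, Sf_E_left, Gf_E, Gf_E_left, coord_E]
        norm_num
        rw [coord_mk n 0 h0, coord_mk n 0 h0, coord_mk n 1 h1, coord_mk n 1 h1]
        simp only [Gf, coord_mk n 0 h0, coord_mk n 1 h1]
        ring
      · simp only [gg_E_left, gg_E_right, gg_EE, E_self, Sf_E, Sf_E_left, Gf_E, Gf_E_left, coord_E,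
          if_neg hi0, if_neg hi1, if_pos rfl]
        ring
  unfold Ricc
  rw [Finset.sum_congr rfl fun i _ => step i]
  simp only [Finset.sum_add_distrib]
  rw [← Finset.mul_sum, sum_ind n 0 h0, sum_ind n 1 h1]
  simp only [Finset.sum_const, Finset.card_univ, Fintype.card_fin, nsmul_eq_mul]
  rw [show (∑ i, X i * Y i) = gg n X Y from rfl]
  have h2' : (2 : ℝ) ≤ (n : ℝ) := by exact_mod_cast h2
  simp only [Sf, Gf, coord_mk n 0 h0, coord_mk n 1 h1]
  ring

lemma tau_closed (h2 : 2 ≤ n) (a b c μ k : ℝ) :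
    tau n a b c μ k
      = (n : ℝ) * ((n : ℝ) - 1) * (a ^ 2 + b ^ 2 + c ^ 2 + k) - 4 * μ ^ 2 := by
  have h0 : 0 < n := by omega
  have h1 : 1 < n := by omega
  have step : ∀ i : Fin n, Ricc n a b c μ k (E n i) (E n i)
      = ((n : ℝ) - 1) * (a ^ 2 + b ^ 2 + c ^ 2 + k)
        + ((if (i : ℕ) = 0 then ((n : ℝ) - 2) * μ * b - 2 * μ ^ 2 else 0)
          + (if (i : ℕ) = 1 then -(((n : ℝ) - 2) * μ * b) - 2 * μ ^ 2 else 0)) := by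
    intro i
    rw [Ricc_closed n h2, gg_EE, Sf_E, Gf_E]
    simp only [coord_E, if_pos rfl]
    split_ifs <;> first | omega | ring
  unfold tau
  rw [Finset.sum_congr rfl fun i _ => step i]
  simp only [Finset.sum_add_distrib]
  rw [sum_ind n 0 h0, sum_ind n 1 h1]
  simp only [Finset.sum_const, Finset.card_univ, Fintype.card_fin, nsmul_eq_mul]
  ring

lemma Ct_closed (h4 : 4 ≤ n) (a b c μ k : ℝ) (X Y Z W : Fin n → ℝ) :
    Ct n a b c μ k X Y Z W
      = μ ^ 2 * ((-4 / (((n : ℝ) - 1) * ((n : ℝ) - 2)))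
            * (gg n X W * gg n Y Z - gg n X Z * gg n Y W)
          + (2 / ((n : ℝ) - 2))
            * ((gg n X W * Gf n Y Z - gg n X Z * Gf n Y W)
              + (Gf n X W * gg n Y Z - Gf n X Z * gg n Y W))
          - 2 * (Gf n X W * Gf n Y Z - Gf n X Z * Gf n Y W)) := by
  have h2 : 2 ≤ n := by omega
  have hn1 : ((n : ℝ) - 1) ≠ 0 := by
    have : (4 : ℝ) ≤ (n : ℝ) := by exact_mod_cast h4
    nlinarith
  have hn2 : ((n : ℝ) - 2) ≠ 0 := by
    have : (4 : ℝ) ≤ (n : ℝ) := by exact_mod_cast h4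
    nlinarith
  unfold Ct KN
  rw [Rt_closed n h2, tau_closed n h2]
  simp only [Ricc_closed n h2]
  field_simp
  ring

end Closed
section CurvOp

variable (n : ℕ)

lemma coord_curvOp (m : ℕ) (h : m < n)
    (T : (Fin n → ℝ) → (Fin n → ℝ) → (Fin n → ℝ) → (Fin n → ℝ) → ℝ)
    (X Y Z : Fin n → ℝ) :
    coord n (curvOp n T X Y Z) m = T X Y Z (E n ⟨m, h⟩) := by
  rw [coord_mk n m h]
  rfl

lemma gg_curvOp_left (h2 : 2 ≤ n) (a b c μ k : ℝ) (X Y Z W : Fin n → ℝ) :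
    gg n (curvOp n (Rt n a b c μ k) X Y Z) W = Rt n a b c μ k X Y Z W := by
  have h0 : 0 < n := by omega
  have h1 : 1 < n := by omega
  have step : ∀ j : Fin n, Rt n a b c μ k X Y Z (E n j) * W j
      = ((a ^ 2 + b ^ 2 + c ^ 2 + k) * gg n Y Z + μ * Sf n a b Y Z) * (X j * W j)
        + (-((a ^ 2 + b ^ 2 + c ^ 2 + k) * gg n X Z) - μ * Sf n a b X Z) * (Y j * W j)
        + ((if (j : ℕ) = 0 then
              (μ * ((a * X ⟨1, h1⟩ + b * X ⟨0, h0⟩) * gg n Y Z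
                  - gg n X Z * (a * Y ⟨1, h1⟩ + b * Y ⟨0, h0⟩))
                - 2 * μ ^ 2 * (X ⟨0, h0⟩ * Gf n Y Z - Gf n X Z * Y ⟨0, h0⟩)) * W j else 0)
          + (if (j : ℕ) = 1 then
              (μ * ((a * X ⟨0, h0⟩ - b * X ⟨1, h1⟩) * gg n Y Z
                  - gg n X Z * (a * Y ⟨0, h0⟩ - b * Y ⟨1, h1⟩))
                - 2 * μ ^ 2 * (X ⟨1, h1⟩ * Gf n Y Z - Gf n X Z * Y ⟨1, h1⟩)) * W j else 0)) := by
    intro j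
    rw [Rt_closed n h2]
    by_cases hj0 : (j : ℕ) = 0
    · have : j = ⟨0, h0⟩ := Fin.ext hj0
      subst this
      simp only [gg_E_left, gg_E_right, gg_EE, E_self, Sf_E, Sf_E_left, Gf_E, Gf_E_left, coord_E]
      norm_num
      rw [coord_mk n 0 h0, coord_mk n 0 h0, coord_mk n 1 h1, coord_mk n 1 h1]
      ring
    · by_cases hj1 : (j : ℕ) = 1
      · have : j = ⟨1, h1⟩ := Fin.ext hj1
        subst this
        simp only [gg_E_left, gg_E_right, gg_EE, E_self, Sf_E, Sf_E_left, Gf_E, Gf_E_left, coord_E]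
        norm_num
        rw [coord_mk n 0 h0, coord_mk n 0 h0, coord_mk n 1 h1, coord_mk n 1 h1]
        ring
      · simp only [gg_E_left, gg_E_right, gg_EE, E_self, Sf_E, Sf_E_left, Gf_E, Gf_E_left,
          coord_E, if_neg hj0, if_neg hj1]
        ring
  have lhs : gg n (curvOp n (Rt n a b c μ k) X Y Z) W
      = ∑ j : Fin n, Rt n a b c μ k X Y Z (E n j) * W j := rfl
  rw [lhs, Finset.sum_congr rfl fun j _ => step j]
  simp only [Finset.sum_add_distrib]
  rw [← Finset.mul_sum, ← Finset.mul_sum, sum_ind n 0 h0, sum_ind n 1 h1]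
  rw [show (∑ j, X j * W j) = gg n X W from rfl, show (∑ j, Y j * W j) = gg n Y W from rfl]
  rw [Rt_closed n h2]
  simp only [Sf, Gf, coord_mk n 0 h0, coord_mk n 1 h1]
  ring

lemma gg_curvOp_right (h2 : 2 ≤ n) (a b c μ k : ℝ) (X Y Z W : Fin n → ℝ) :
    gg n W (curvOp n (Rt n a b c μ k) X Y Z) = Rt n a b c μ k X Y Z W := by
  rw [gg_comm, gg_curvOp_left n h2]

end CurvOp
section Reverse

variable (n : ℕ)

lemma RC_mu_zero (h4 : 4 ≤ n) (a b c k : ℝ) (X1 X2 X3 X4 X Y : Fin n → ℝ) :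
    RC n a b c 0 k X1 X2 X3 X4 X Y = 0 := by
  simp only [RC, dotT, Ct_closed n h4]
  ring

set_option maxHeartbeats 2000000 in
lemma RC_case2 (h4 : 4 ≤ n) (c μ : ℝ) (X1 X2 X3 X4 X Y : Fin n → ℝ) :
    RC n 0 0 c μ (-(c ^ 2)) X1 X2 X3 X4 X Y = 0 := by
  have h2 : 2 ≤ n := by omega
  have h0 : 0 < n := by omega
  have h1 : 1 < n := by omega
  simp only [RC, dotT, Ct_closed n h4, Sf, Gf]
  simp only [gg_curvOp_left n h2, gg_curvOp_right n h2,
    coord_curvOp n 0 h0, coord_curvOp n 1 h1]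
  simp only [Rt_closed n h2, Sf, Gf]
  simp only [gg_E_right, coord_E]
  norm_num
  simp only [coord_mk n 0 h0, coord_mk n 1 h1]
  ring
section Eval

variable (n : ℕ)

lemma hn1R {n : ℕ} (h4 : 4 ≤ n) : ((n : ℝ) - 1) ≠ 0 := by
  have : (4 : ℝ) ≤ (n : ℝ) := by exact_mod_cast h4
  nlinarith

lemma hn2R {n : ℕ} (h4 : 4 ≤ n) : ((n : ℝ) - 2) ≠ 0 := by
  have : (4 : ℝ) ≤ (n : ℝ) := by exact_mod_cast h4
  nlinarith

lemma evalRC_T1 (h4 : 4 ≤ n) (a b c μ k : ℝ) :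
    RC n a b c μ k (E n ⟨0, by omega⟩) (E n ⟨2, by omega⟩) (E n ⟨0, by omega⟩)
      (E n ⟨2, by omega⟩) (E n ⟨0, by omega⟩) (E n ⟨1, by omega⟩) = 0 := by
  have h2 : 2 ≤ n := by omega
  have h0 : 0 < n := by omega
  have h1 : 1 < n := by omega
  simp only [RC, dotT, Ct_closed n h4, Sf, Gf]
  simp only [gg_curvOp_left n h2, gg_curvOp_right n h2,
    coord_curvOp n 0 h0, coord_curvOp n 1 h1]
  simp only [Rt_closed n h2, Sf, Gf]
  simp only [gg_E_right, gg_E_left, coord_E, E]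
  norm_num [Fin.mk.injEq]

lemma evalQg_T1 (h4 : 4 ≤ n) (a b c μ k : ℝ) :
    Q n (gg n) (KN n (gg n) (Ricc n a b c μ k)) (E n ⟨0, by omega⟩) (E n ⟨2, by omega⟩)
      (E n ⟨0, by omega⟩) (E n ⟨2, by omega⟩) (E n ⟨0, by omega⟩) (E n ⟨1, by omega⟩)
    = -2 * a * μ * ((n : ℝ) - 2) := by
  have h2 : 2 ≤ n := by omega
  have h0 : 0 < n := by omega
  have h1 : 1 < n := by omega
  simp only [Q, dotT, wedge, KN, Ricc_closed n h2, Sf, Gf,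
    coord_mk n 0 h0, coord_mk n 1 h1, gg_E_right, gg_E_left, E]
  norm_num [Fin.mk.injEq]
  ring

end Eval
section Eval2

variable (n : ℕ)

lemma evalRC_T2 (h4 : 4 ≤ n) (a b c μ k : ℝ) :
    RC n a b c μ k (E n ⟨0, by omega⟩) (E n ⟨2, by omega⟩) (E n ⟨1, by omega⟩) (E n ⟨2, by omega⟩) (E n ⟨0, by omega⟩) (E n ⟨1, by omega⟩) = 0 := by
  have h2 : 2 ≤ n := by omega
  have h0 : 0 < n := by omega
  have h1 : 1 < n := by omega
  have hn1 := hn1R h4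
  have hn2 := hn2R h4
  simp only [RC, dotT, Ct_closed n h4, Sf, Gf]
  simp only [gg_curvOp_left n h2, gg_curvOp_right n h2,
    coord_curvOp n 0 h0, coord_curvOp n 1 h1]
  simp only [Rt_closed n h2, Sf, Gf]
  simp only [gg_E_right, gg_E_left, coord_E, E]
  norm_num [Fin.mk.injEq]
  try field_simp
  try ring

lemma evalQg_T2 (h4 : 4 ≤ n) (a b c μ k : ℝ) :
    Q n (gg n) (KN n (gg n) (Ricc n a b c μ k)) (E n ⟨0, by omega⟩) (E n ⟨2, by omega⟩) (E n ⟨1, by omega⟩) (E n ⟨2, by omega⟩) (E n ⟨0, by omega⟩) (E n ⟨1, by omega⟩)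
    = 2 * b * μ * ((n : ℝ) - 2) := by
  have h2 : 2 ≤ n := by omega
  have h0 : 0 < n := by omega
  have h1 : 1 < n := by omega
  simp only [Q, dotT, wedge, KN, Ricc_closed n h2, Sf, Gf,
    coord_mk n 0 h0, coord_mk n 1 h1, gg_E_right, gg_E_left, E]
  norm_num [Fin.mk.injEq]
  ring

lemma evalRC_T3 (h4 : 4 ≤ n) (a b c μ k : ℝ) :
    RC n a b c μ k (E n ⟨0, by omega⟩) (E n ⟨2, by omega⟩) (E n ⟨2, by omega⟩) (E n ⟨3, by omega⟩) (E n ⟨1, by omega⟩) (E n ⟨3, by omega⟩) = -2 * a * μ ^ 3 / ((n : ℝ) - 2) := by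
  have h2 : 2 ≤ n := by omega
  have h0 : 0 < n := by omega
  have h1 : 1 < n := by omega
  have hn1 := hn1R h4
  have hn2 := hn2R h4
  simp only [RC, dotT, Ct_closed n h4, Sf, Gf]
  simp only [gg_curvOp_left n h2, gg_curvOp_right n h2,
    coord_curvOp n 0 h0, coord_curvOp n 1 h1]
  simp only [Rt_closed n h2, Sf, Gf]
  simp only [gg_E_right, gg_E_left, coord_E, E]
  norm_num [Fin.mk.injEq]
  field_simp
  ring

lemma evalQg_T3 (h4 : 4 ≤ n) (a b c μ k : ℝ) :
    Q n (gg n) (KN n (gg n) (Ricc n a b c μ k)) (E n ⟨0, by omega⟩) (E n ⟨2, by omega⟩) (E n ⟨2, by omega⟩) (E n ⟨3, by omega⟩) (E n ⟨1, by omega⟩) (E n ⟨3, by omega⟩)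
    = -(a * μ) * ((n : ℝ) - 2) := by
  have h2 : 2 ≤ n := by omega
  have h0 : 0 < n := by omega
  have h1 : 1 < n := by omega
  simp only [Q, dotT, wedge, KN, Ricc_closed n h2, Sf, Gf,
    coord_mk n 0 h0, coord_mk n 1 h1, gg_E_right, gg_E_left, E]
  norm_num [Fin.mk.injEq]
  ring

lemma evalRC_T4 (h4 : 4 ≤ n) (a b c μ k : ℝ) :
    RC n a b c μ k (E n ⟨0, by omega⟩) (E n ⟨2, by omega⟩) (E n ⟨2, by omega⟩) (E n ⟨3, by omega⟩) (E n ⟨0, by omega⟩) (E n ⟨3, by omega⟩) = -2 * μ ^ 2 * (a ^ 2 + b ^ 2 + c ^ 2 + k + b * μ) / ((n : ℝ) - 2) := by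
  have h2 : 2 ≤ n := by omega
  have h0 : 0 < n := by omega
  have h1 : 1 < n := by omega
  have hn1 := hn1R h4
  have hn2 := hn2R h4
  simp only [RC, dotT, Ct_closed n h4, Sf, Gf]
  simp only [gg_curvOp_left n h2, gg_curvOp_right n h2,
    coord_curvOp n 0 h0, coord_curvOp n 1 h1]
  simp only [Rt_closed n h2, Sf, Gf]
  simp only [gg_E_right, gg_E_left, coord_E, E]
  norm_num [Fin.mk.injEq]
  field_simp
  ring

lemma evalQg_T4 (h4 : 4 ≤ n) (a b c μ k : ℝ) :
    Q n (gg n) (KN n (gg n) (Ricc n a b c μ k)) (E n ⟨0, by omega⟩) (E n ⟨2, by omega⟩) (E n ⟨2, by omega⟩) (E n ⟨3, by omega⟩) (E n ⟨0, by omega⟩) (E n ⟨3, by omega⟩)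
    = 2 * μ ^ 2 - b * μ * ((n : ℝ) - 2) := by
  have h2 : 2 ≤ n := by omega
  have h0 : 0 < n := by omega
  have h1 : 1 < n := by omega
  simp only [Q, dotT, wedge, KN, Ricc_closed n h2, Sf, Gf,
    coord_mk n 0 h0, coord_mk n 1 h1, gg_E_right, gg_E_left, E]
  norm_num [Fin.mk.injEq]
  ring

lemma evalRC_T5 (h4 : 4 ≤ n) (a b c μ k : ℝ) :
    RC n a b c μ k (E n ⟨1, by omega⟩) (E n ⟨2, by omega⟩) (E n ⟨2, by omega⟩) (E n ⟨3, by omega⟩) (E n ⟨1, by omega⟩) (E n ⟨3, by omega⟩) = -2 * μ ^ 2 * (a ^ 2 + b ^ 2 + c ^ 2 + k - b * μ) / ((n : ℝ) - 2) := by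
  have h2 : 2 ≤ n := by omega
  have h0 : 0 < n := by omega
  have h1 : 1 < n := by omega
  have hn1 := hn1R h4
  have hn2 := hn2R h4
  simp only [RC, dotT, Ct_closed n h4, Sf, Gf]
  simp only [gg_curvOp_left n h2, gg_curvOp_right n h2,
    coord_curvOp n 0 h0, coord_curvOp n 1 h1]
  simp only [Rt_closed n h2, Sf, Gf]
  simp only [gg_E_right, gg_E_left, coord_E, E]
  norm_num [Fin.mk.injEq]
  field_simp
  ring

lemma evalQg_T5 (h4 : 4 ≤ n) (a b c μ k : ℝ) :
    Q n (gg n) (KN n (gg n) (Ricc n a b c μ k)) (E n ⟨1, by omega⟩) (E n ⟨2, by omega⟩) (E n ⟨2, by omega⟩) (E n ⟨3, by omega⟩) (E n ⟨1, by omega⟩) (E n ⟨3, by omega⟩)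
    = 2 * μ ^ 2 + b * μ * ((n : ℝ) - 2) := by
  have h2 : 2 ≤ n := by omega
  have h0 : 0 < n := by omega
  have h1 : 1 < n := by omega
  simp only [Q, dotT, wedge, KN, Ricc_closed n h2, Sf, Gf,
    coord_mk n 0 h0, coord_mk n 1 h1, gg_E_right, gg_E_left, E]
  norm_num [Fin.mk.injEq]
  ring

lemma evalRC_T6 (h4 : 4 ≤ n) (a b c μ k : ℝ) :
    RC n a b c μ k (E n ⟨0, by omega⟩) (E n ⟨1, by omega⟩) (E n ⟨0, by omega⟩) (E n ⟨2, by omega⟩) (E n ⟨1, by omega⟩) (E n ⟨2, by omega⟩) = -2 * μ ^ 2 * ((n : ℝ) - 3) * (a ^ 2 + b ^ 2 + c ^ 2 + k - b * μ) / ((n : ℝ) - 2) := by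
  have h2 : 2 ≤ n := by omega
  have h0 : 0 < n := by omega
  have h1 : 1 < n := by omega
  have hn1 := hn1R h4
  have hn2 := hn2R h4
  simp only [RC, dotT, Ct_closed n h4, Sf, Gf]
  simp only [gg_curvOp_left n h2, gg_curvOp_right n h2,
    coord_curvOp n 0 h0, coord_curvOp n 1 h1]
  simp only [Rt_closed n h2, Sf, Gf]
  simp only [gg_E_right, gg_E_left, coord_E, E]
  norm_num [Fin.mk.injEq]
  field_simp
  ring

lemma evalQg_T6 (h4 : 4 ≤ n) (a b c μ k : ℝ) :
    Q n (gg n) (KN n (gg n) (Ricc n a b c μ k)) (E n ⟨0, by omega⟩) (E n ⟨1, by omega⟩) (E n ⟨0, by omega⟩) (E n ⟨2, by omega⟩) (E n ⟨1, by omega⟩) (E n ⟨2, by omega⟩)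
    = -2 * μ ^ 2 - b * μ * ((n : ℝ) - 2) := by
  have h2 : 2 ≤ n := by omega
  have h0 : 0 < n := by omega
  have h1 : 1 < n := by omega
  simp only [Q, dotT, wedge, KN, Ricc_closed n h2, Sf, Gf,
    coord_mk n 0 h0, coord_mk n 1 h1, gg_E_right, gg_E_left, E]
  norm_num [Fin.mk.injEq]
  ring

end Eval2
end Reverse

/-- `R·C` and `Q(g, g∧Ricc)` are linearly dependent iff `μ = 0`,
or `a = 0`, `b = 0` and `c² + k̃ = 0`; in particular if `k̃ > 0` this is
equivalent to `μ = 0`. -/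
theorem statement_14 (n : ℕ) (hn : 4 ≤ n) (a b c μ k : ℝ) :
    ((∃ L : ℝ, ∀ X1 X2 X3 X4 X Y : Fin n → ℝ,
        RC n a b c μ k X1 X2 X3 X4 X Y
          = L * Q n (gg n) (KN n (gg n) (Ricc n a b c μ k)) X1 X2 X3 X4 X Y)
      ↔ (μ = 0 ∨ (a = 0 ∧ b = 0 ∧ c ^ 2 + k = 0)))
    ∧ (0 < k →
      ((∃ L : ℝ, ∀ X1 X2 X3 X4 X Y : Fin n → ℝ,
          RC n a b c μ k X1 X2 X3 X4 X Y
            = L * Q n (gg n) (KN n (gg n) (Ricc n a b c μ k)) X1 X2 X3 X4 X Y)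
        ↔ μ = 0)) := by
  have hn2 : ((n : ℝ) - 2) ≠ 0 := hn2R hn
  have main : (∃ L : ℝ, ∀ X1 X2 X3 X4 X Y : Fin n → ℝ,
      RC n a b c μ k X1 X2 X3 X4 X Y
        = L * Q n (gg n) (KN n (gg n) (Ricc n a b c μ k)) X1 X2 X3 X4 X Y)
      ↔ (μ = 0 ∨ (a = 0 ∧ b = 0 ∧ c ^ 2 + k = 0)) := by
    constructor
    · rintro ⟨L, h⟩
      by_cases hμ : μ = 0
      · exact Or.inl hμ
      · right
        have e1 : (0 : ℝ) = L * (-2 * a * μ * ((n : ℝ) - 2)) := by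
          rw [← evalRC_T1 n hn a b c μ k, ← evalQg_T1 n hn a b c μ k]
          exact h _ _ _ _ _ _
        have e2 : (0 : ℝ) = L * (2 * b * μ * ((n : ℝ) - 2)) := by
          rw [← evalRC_T2 n hn a b c μ k, ← evalQg_T2 n hn a b c μ k]
          exact h _ _ _ _ _ _
        have e3 : -2 * a * μ ^ 3 / ((n : ℝ) - 2)
            = L * (-(a * μ) * ((n : ℝ) - 2)) := by
          rw [← evalRC_T3 n hn a b c μ k, ← evalQg_T3 n hn a b c μ k]
          exact h _ _ _ _ _ _
        have e4 : -2 * μ ^ 2 * (a ^ 2 + b ^ 2 + c ^ 2 + k + b * μ) / ((n : ℝ) - 2)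
            = L * (2 * μ ^ 2 - b * μ * ((n : ℝ) - 2)) := by
          rw [← evalRC_T4 n hn a b c μ k, ← evalQg_T4 n hn a b c μ k]
          exact h _ _ _ _ _ _
        have e5 : -2 * μ ^ 2 * (a ^ 2 + b ^ 2 + c ^ 2 + k - b * μ) / ((n : ℝ) - 2)
            = L * (2 * μ ^ 2 + b * μ * ((n : ℝ) - 2)) := by
          rw [← evalRC_T5 n hn a b c μ k, ← evalQg_T5 n hn a b c μ k]
          exact h _ _ _ _ _ _
        have e6 : -2 * μ ^ 2 * ((n : ℝ) - 3) * (a ^ 2 + b ^ 2 + c ^ 2 + k - b * μ)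
              / ((n : ℝ) - 2)
            = L * (-2 * μ ^ 2 - b * μ * ((n : ℝ) - 2)) := by
          rw [← evalRC_T6 n hn a b c μ k, ← evalQg_T6 n hn a b c μ k]
          exact h _ _ _ _ _ _
        rw [div_eq_iff hn2] at e3 e4 e5 e6
        have ha : a = 0 := by
          by_contra hA
          have hL : L = 0 := by
            rcases mul_eq_zero.mp e1.symm with hL | hz
            · exact hL
            · exfalso
              have : (-2 : ℝ) * a * μ ≠ 0 :=
                mul_ne_zero (mul_ne_zero (by norm_num) hA) hμ
              exact (mul_ne_zero this hn2) hz
          rw [hL, zero_mul, zero_mul] at e3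
          have : a * μ ^ 3 = 0 := by linear_combination (-(1 : ℝ)/2) * e3
          rcases mul_eq_zero.mp this with h' | h'
          · exact hA h'
          · exact hμ (pow_eq_zero_iff (by norm_num) |>.mp h')
        have hb : b = 0 := by
          by_contra hB
          have hL : L = 0 := by
            rcases mul_eq_zero.mp e2.symm with hL | hz
            · exact hL
            · exfalso
              have : (2 : ℝ) * b * μ ≠ 0 :=
                mul_ne_zero (mul_ne_zero (by norm_num) hB) hμ
              exact (mul_ne_zero this hn2) hz
          rw [hL, zero_mul, zero_mul] at e4 e5
          have : b * μ ^ 3 = 0 := by linear_combination (-(1 : ℝ)/4) * e4 + (1 : ℝ)/4 * e5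
          rcases mul_eq_zero.mp this with h' | h'
          · exact hB h'
          · exact hμ (pow_eq_zero_iff (by norm_num) |>.mp h')
        refine ⟨ha, hb, ?_⟩
        rw [ha, hb] at e4 e6
        have hsum : μ ^ 2 * ((n : ℝ) - 2) * (c ^ 2 + k) = 0 := by
          linear_combination (-(1 : ℝ)/2) * e4 + (-(1 : ℝ)/2) * e6
        rcases mul_eq_zero.mp hsum with h' | h'
        · exfalso
          rcases mul_eq_zero.mp h' with h'' | h''
          · exact hμ (pow_eq_zero_iff (by norm_num) |>.mp h'')
          · exact hn2 h''
        · exact h'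
    · rintro (hμ | ⟨ha, hb, hck⟩)
      · subst hμ
        exact ⟨0, fun X1 X2 X3 X4 X Y => by rw [RC_mu_zero n hn, zero_mul]⟩
      · subst ha
        subst hb
        have hk : k = -(c ^ 2) := by linarith
        subst hk
        exact ⟨0, fun X1 X2 X3 X4 X Y => by rw [RC_case2 n hn, zero_mul]⟩
  refine ⟨main, fun hk => ?_⟩
  rw [main]
  constructor
  · rintro (h | ⟨_, _, hck⟩)
    · exact h
    · exfalso
      nlinarith [sq_nonneg c]
  · exact fun h => Or.inl h

end Wintgen
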